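/- Let 1 ≤ k and 3k ≤ n, and let S ⊆ {1,…,n} with |S| = k. With D_S the planted biclique distribution, let ψ_S ∈ ℂ^{F₂ⁿ} be its coherent encoding, ψ_S(x) = √(D_S(x)), and let u ∈ ℂ^{F₂ⁿ} be the uniform superposition u(x) = 2^{−n/2}. Then the overlap satisfies √(1 − k/n) ≤ ⟨u, ψ_S⟩ ≤ (1 + 2^{−(k+1)/2})·√(1 − k/n). -/

import Mathlib

/-- The planted bipartite `k`-clique distribution `D_S` on `F₂ⁿ`. -/
noncomputable def bicliqueD (n k : ℕ) (S : Finset (Fin n)) (x : Fin n → ZMod 2) : ℝ :=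
  if ∀ i ∈ S, x i = 1 then
    ((k : ℝ) / n) / 2 ^ (n - k) + (1 - (k : ℝ) / n) / 2 ^ n
  else (1 - (k : ℝ) / n) / 2 ^ n

/-!
`D_S` takes only two values: `(1 - r + r 2^k) / 2^n` on the `2^(n-k)` points that are `1` on `S`
and `(1 - r) / 2^n` elsewhere, where `r = k / n`. Hence the overlap is
`2^{-k} √(1 - r + r 2^k) + (1 - 2^{-k}) √(1 - r)`. It is at least `√(1 - r)` because the first
square root is, and by `√(a + b) ≤ √a + √b` it exceeds `√(1 - r)` by at most `√(r 2^{-k})`,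
which is at most `2^{-(k+1)/2} √(1 - r)` exactly when `3r ≤ 1`.
-/

open Finset

theorem Real.sqrt_add_le_sqrt_add_sqrt {a b : ℝ} (ha : 0 ≤ a) (hb : 0 ≤ b) :
    √(a + b) ≤ √a + √b := by
  rw [Real.sqrt_le_left (by positivity)]
  nlinarith [Real.sq_sqrt ha, Real.sq_sqrt hb, Real.sqrt_nonneg a, Real.sqrt_nonneg b]

theorem card_filter_forall_mem_eq_const {α β : Type*} [Fintype α] [DecidableEq α] [Fintype β]
    (S : Finset α) (c : β) [DecidablePred fun x : α → β => ∀ i ∈ S, x i = c] :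
    #{x : α → β | ∀ i ∈ S, x i = c} = Fintype.card β ^ (Fintype.card α - #S) := by
  have hpi : ({x : α → β | ∀ i ∈ S, x i = c} : Finset _) =
      Fintype.piFinset (fun i => if i ∈ S then {c} else univ) := by
    ext x
    simp only [mem_filter, mem_univ, true_and, Fintype.mem_piFinset]
    refine forall_congr' fun i => ?_
    split_ifs with h <;> simp [h]
  rw [hpi, Fintype.card_piFinset]
  simp only [apply_ite card, card_singleton, card_univ]
  rw [prod_ite, prod_const_one, one_mul, prod_const, filter_not, card_sdiff, filter_mem_eq_inter,
    univ_inter, card_univ, inter_univ]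

theorem sum_ite_eq_card_filter_mul_add {α : Type*} [Fintype α] (P : α → Prop) [DecidablePred P]
    (a b : ℝ) :
    ∑ x, (if P x then a else b) = #{x | P x} * a + (Fintype.card α - #{x | P x}) * b := by
  rw [sum_ite, sum_const, sum_const, nsmul_eq_mul, nsmul_eq_mul, ← card_univ,
    ← card_filter_add_card_filter_not P (s := univ)]
  push_cast
  ring

/-- The overlap of the uniform superposition with the coherent encoding of the mixture
`(1 - r) • uniform + r • (uniform on a set of relative size q⁻¹)`. -/
noncomputable def plantedOverlap (r q : ℝ) : ℝ :=
  q⁻¹ * √(1 - r + r * q) + (1 - q⁻¹) * √(1 - r)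

section PlantedOverlap

variable {r q : ℝ}

theorem sqrt_one_sub_le_plantedOverlap (hr : 0 ≤ r) (hq : 0 ≤ q) :
    √(1 - r) ≤ plantedOverlap r q := by
  have hsqrt : √(1 - r) ≤ √(1 - r + r * q) := Real.sqrt_le_sqrt (by nlinarith)
  unfold plantedOverlap
  nlinarith [inv_nonneg.mpr hq]

theorem plantedOverlap_le (hr : 0 ≤ r) (hr3 : 3 * r ≤ 1) (hq : 0 < q) :
    plantedOverlap r q ≤ (1 + (√(2 * q))⁻¹) * √(1 - r) := by
  have hsplit : √(1 - r + r * q) ≤ √(1 - r) + √(r * q) :=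
    Real.sqrt_add_le_sqrt_add_sqrt (by linarith) (by positivity)
  have hexcess : q⁻¹ * √(r * q) ≤ (√(2 * q))⁻¹ * √(1 - r) := by
    rw [← pow_le_pow_iff_left₀ (by positivity) (by positivity) two_ne_zero, mul_pow, mul_pow,
      inv_pow, inv_pow, Real.sq_sqrt (by positivity), Real.sq_sqrt (by positivity),
      Real.sq_sqrt (by linarith)]
    calc (q ^ 2)⁻¹ * (r * q) = q⁻¹ * r := by field_simp
      _ ≤ q⁻¹ * ((1 - r) / 2) := by gcongr; linarith
      _ = (2 * q)⁻¹ * (1 - r) := by field_simp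
  calc plantedOverlap r q
      ≤ q⁻¹ * (√(1 - r) + √(r * q)) + (1 - q⁻¹) * √(1 - r) := by
        unfold plantedOverlap; gcongr
    _ = √(1 - r) + q⁻¹ * √(r * q) := by ring
    _ ≤ (1 + (√(2 * q))⁻¹) * √(1 - r) := by linarith

end PlantedOverlap

section Biclique

variable {n k : ℕ} {S : Finset (Fin n)}

theorem bicliqueD_eq (hkn : k ≤ n) (x : Fin n → ZMod 2) :
    bicliqueD n k S x =
      (if ∀ i ∈ S, x i = 1 then 1 - (k : ℝ) / n + k / n * 2 ^ k else 1 - (k : ℝ) / n) / 2 ^ n := by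
  unfold bicliqueD
  split_ifs
  · rw [← pow_sub_mul_pow 2 hkn]; field_simp; ring
  · rfl

theorem sum_uniform_mul_sqrt_bicliqueD (hkn : k ≤ n) (hS : #S = k) :
    ∑ x : Fin n → ZMod 2, (√(2 ^ n))⁻¹ * √(bicliqueD n k S x) = plantedOverlap (k / n) (2 ^ k) := by
  have hterm (v : ℝ) : (√(2 ^ n))⁻¹ * √(v / 2 ^ n) = √v / 2 ^ n := by
    rw [Real.sqrt_div' _ (by positivity), ← div_eq_inv_mul, div_div,
      Real.mul_self_sqrt (by positivity)]
  simp_rw [bicliqueD_eq hkn, hterm, apply_ite Real.sqrt]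
  rw [← sum_div, sum_ite_eq_card_filter_mul_add, card_filter_forall_mem_eq_const]
  simp only [hS, ZMod.card, Fintype.card_fin, Fintype.card_fun, plantedOverlap]
  push_cast
  rw [← pow_sub_mul_pow (2 : ℝ) hkn]
  field_simp

end Biclique

theorem biclique_overlap_bounds_general (n k : ℕ) (hkn : 3 * k ≤ n)
    (S : Finset (Fin n)) (hS : S.card = k) :
    Real.sqrt (1 - (k : ℝ) / n)
        ≤ ∑ x : Fin n → ZMod 2, (Real.sqrt (2 ^ n))⁻¹ * Real.sqrt (bicliqueD n k S x) ∧
    ∑ x : Fin n → ZMod 2, (Real.sqrt (2 ^ n))⁻¹ * Real.sqrt (bicliqueD n k S x)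
        ≤ (1 + (Real.sqrt (2 ^ (k + 1)))⁻¹) * Real.sqrt (1 - (k : ℝ) / n) := by
  have hr : 0 ≤ (k : ℝ) / n := by positivity
  have hr3 : 3 * ((k : ℝ) / n) ≤ 1 :=
    calc 3 * ((k : ℝ) / n) = ((3 * k : ℕ) : ℝ) / n := by push_cast; ring
      _ ≤ n / n := by gcongr
      _ ≤ 1 := div_self_le_one _
  rw [sum_uniform_mul_sqrt_bicliqueD (by omega) hS, pow_succ']
  exact ⟨sqrt_one_sub_le_plantedOverlap hr (by positivity), plantedOverlap_le hr hr3 (by positivity)⟩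

/-- Overlap bounds between the coherent encoding `ψ_S` of the planted biclique distribution
and the uniform superposition `u`: `√(1 - k/n) ≤ ⟨u, ψ_S⟩ ≤ (1 + 2^{-(k+1)/2})·√(1 - k/n)`. -/
theorem biclique_overlap_bounds (n k : ℕ) (hk : 1 ≤ k) (hkn : 3 * k ≤ n)
    (S : Finset (Fin n)) (hS : S.card = k) :
    Real.sqrt (1 - (k : ℝ) / n)
        ≤ ∑ x : Fin n → ZMod 2, (Real.sqrt (2 ^ n))⁻¹ * Real.sqrt (bicliqueD n k S x) ∧
    ∑ x : Fin n → ZMod 2, (Real.sqrt (2 ^ n))⁻¹ * Real.sqrt (bicliqueD n k S x)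
        ≤ (1 + (Real.sqrt (2 ^ (k + 1)))⁻¹) * Real.sqrt (1 - (k : ℝ) / n) :=
  biclique_overlap_bounds_general n k hkn S hS
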